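/- Let (R, φ) be a real Picard–Vessiot extension for the system φY = AY over (k, φ) with fundamental matrix U ∈ GL_n(R). Let G_{R[i]} be the group of difference ring automorphisms of R[i] fixing k[i] pointwise, and let G := {ψ|_R : ψ ∈ G_{R[i]}} be the real difference Galois group. Then for every ψ ∈ G the matrix U⁻¹ψ(U) lies in GL_n(C[i]), and the map ρ_U : ψ ↦ U⁻¹ψ(U) is an injective group homomorphism from G to GL_n(C[i]). -/

import Mathlib

universe u v w x

open scoped TensorProduct

section DifferenceAlgebra

variable {R : Type*} [CommRing R]

/-- A difference ideal of `(R, φ)`: an ideal stable under `φ`. -/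
def IsDiffIdeal (φ : R ≃+* R) (I : Ideal R) : Prop :=
  ∀ y ∈ I, φ y ∈ I

/-- A simple difference ring: the only difference ideals are `(0)` and `R`. -/
def IsSimpleDiffRing (φ : R ≃+* R) : Prop :=
  ∀ I : Ideal R, IsDiffIdeal φ I → I = ⊥ ∨ I = ⊤

/-- A real (commutative) ring: `0` is not a sum of squares of nonzero elements. -/
def IsRealRing (A : Type*) [CommRing A] : Prop :=
  ∀ (m : ℕ) (f : Fin m → A), (∀ i, f i ≠ 0) → ∑ i, f i ^ 2 = 0 → m = 0

/-- A real closed field: a real field with no proper real algebraic extension. -/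
def IsRealClosedField (C : Type u) [Field C] : Prop :=
  IsRealRing C ∧ ∀ (L : Type u) [Field L] [Algebra C L],
    Algebra.IsAlgebraic C L → IsRealRing L → Function.Surjective (algebraMap C L)

/-- The field of constants of a difference field `(k, φ)`. -/
def fixedSubfield {k : Type*} [Field k] (φ : k ≃+* k) : Subfield k where
  carrier := {y | φ y = y}
  mul_mem' := fun {a b} ha hb => by
    simp only [Set.mem_setOf_eq, map_mul] at *
    rw [ha, hb]
  one_mem' := map_one φ
  add_mem' := fun {a b} ha hb => by
    simp only [Set.mem_setOf_eq, map_add] at *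
    rw [ha, hb]
  zero_mem' := map_zero φ
  neg_mem' := fun {a} ha => by
    simp only [Set.mem_setOf_eq, map_neg] at *
    rw [ha]
  inv_mem' := fun a ha => by
    simp only [Set.mem_setOf_eq, map_inv₀] at *
    rw [ha]

/-- `(S, φS)` is a difference ring extension of `(k, φk)`. -/
def DiffCompat {k : Type*} [CommRing k] (S : Type*) [CommRing S] [Algebra k S]
    (φk : k ≃+* k) (φS : S ≃+* S) : Prop :=
  ∀ y : k, φS (algebraMap k S y) = algebraMap k S (φk y)

/-- `U` is a fundamental matrix of solutions of `φ Y = A Y` in `S`. -/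
def IsFundamentalMatrix {k : Type*} [CommRing k] {S : Type*} [CommRing S] [Algebra k S]
    (φS : S ≃+* S) {n : ℕ} (A : Matrix (Fin n) (Fin n) k)
    (U : Matrix (Fin n) (Fin n) S) : Prop :=
  IsUnit U.det ∧ U.map ⇑φS = A.map (algebraMap k S) * U

/-- `S` is generated, as a `k`-algebra, by the entries of `U` and `det(U)⁻¹`. -/
def GeneratedByFund (k : Type*) [CommSemiring k] {S : Type*} [CommRing S] [Algebra k S]
    {n : ℕ} (U : Matrix (Fin n) (Fin n) S) : Prop :=
  Algebra.adjoin k ((Set.range fun p : Fin n × Fin n => U p.1 p.2) ∪ {Ring.inverse U.det}) = ⊤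

/-- A Picard–Vessiot extension for `φ Y = A Y` over `(k, φk)`. -/
def IsPicardVessiot (k : Type*) [Field k] (S : Type*) [CommRing S] [Algebra k S]
    (φk : k ≃+* k) (φS : S ≃+* S) {n : ℕ} (A : Matrix (Fin n) (Fin n) k) : Prop :=
  Nontrivial S ∧ DiffCompat S φk φS ∧
    (∃ U : Matrix (Fin n) (Fin n) S, IsFundamentalMatrix φS A U ∧ GeneratedByFund k U) ∧
    IsSimpleDiffRing φS

/-- `Ri = R[i]`: the ring obtained from `R` by adjoining a square root `j` of `-1`,
free as an `R`-module with basis `1, j`. -/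
def IsAdjoinI (R : Type*) [CommRing R] (Ri : Type*) [CommRing Ri] [Algebra R Ri]
    (j : Ri) : Prop :=
  j ^ 2 = -1 ∧ ∀ y : Ri, ∃! p : R × R, y = algebraMap R Ri p.1 + algebraMap R Ri p.2 * j

end DifferenceAlgebra

/-!
The heart of the matter is that the constants of `R` are exactly `C`. A constant `x` is algebraic
over `k`: nonzero constants of a simple difference ring are units, so in a domain quotient of `R`
in which `x` stays transcendental every `x - m` (`m : ℕ`) would be a unit, whereas by Chevalley's
theorem a transcendental `t` has `t - a` invertible for only finitely many `a ∈ k`. The minimal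
polynomial of `x` over `k` is then `φ`-invariant, so `x` is integral over `C`, and `C[x]` is a real
domain algebraic over the real closed field `C`, forcing `x ∈ C`.

Hence the constants of `R[i]` are `C[i]`. For `ψ` in the Galois group, `ψ(U)` is again a
fundamental matrix, so `U⁻¹ψ(U)` is constant; multiplicativity holds because `ψ₁` fixes `C[i]`,
and injectivity because `R` is generated by the entries of `U` and `det(U)⁻¹`.
-/

open Polynomial

theorem IsRealRing.of_injective {A B : Type*} [CommRing A] [CommRing B] (hB : IsRealRing B)
    (f : A →+* B) (hf : Function.Injective f) : IsRealRing A := by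
  intro m g hg hsum
  refine hB m (f ∘ g) (fun i => (map_ne_zero_iff f hf).mpr (hg i)) ?_
  simp only [Function.comp_apply, ← map_pow, ← map_sum, hsum, map_zero]

theorem IsRealClosedField.mem_range_of_isIntegral {C : Type*} [Field C]
    (hC : IsRealClosedField C) {B : Type*} [CommRing B] [IsDomain B] [Algebra C B]
    (hB : IsRealRing B) {x : B} (hx : IsIntegral C x) : x ∈ Set.range (algebraMap C B) := by
  have : Fact (Irreducible (minpoly C x)) := ⟨minpoly.irreducible hx⟩
  let θ := AdjoinRoot.liftAlgHom (minpoly C x) (Algebra.ofId C B) x (minpoly.aeval C x)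
  have hreal : IsRealRing (AdjoinRoot (minpoly C x)) :=
    hB.of_injective θ.toRingHom θ.toRingHom.injective
  have : Module.Finite C (AdjoinRoot (minpoly C x)) :=
    (AdjoinRoot.powerBasis (minpoly.ne_zero hx)).finite
  obtain ⟨c, hc⟩ := hC.2 _ (Algebra.IsAlgebraic.of_finite C _) hreal (AdjoinRoot.root _)
  exact ⟨c, by rw [← θ.commutes, hc]; exact AdjoinRoot.liftAlgHom_root _ _ _ _⟩

theorem Transcendental.finite_setOf_isUnit_sub {k D : Type*} [Field k] [CommRing D] [IsDomain D]
    [Algebra k D] [Algebra.FiniteType k D] {t : D} (ht : Transcendental k t) :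
    {a : k | IsUnit (t - algebraMap k D a)}.Finite := by
  let : Algebra k[X] D := (Polynomial.aeval t).toAlgebra
  have : IsScalarTower k k[X] D := .of_algebraMap_eq fun a => (aeval_C t a).symm
  have : Algebra.FiniteType k[X] D := .of_restrictScalars_finiteType k k[X] D
  have : Algebra.FinitePresentation k[X] D := Algebra.FinitePresentation.of_finiteType.mp ‹_›
  have hinj : Function.Injective (algebraMap k[X] D) := transcendental_iff_injective.mp ht
  have : Module.IsTorsionFree k[X] D := Module.isTorsionFree_iff_algebraMap_injective.mpr hinj
  -- Spec D → Spec k[X] is flat of finite presentation, hence open; its image contains the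
  -- generic point, hence a basic open set D(f) with f ≠ 0.
  have hopen := PrimeSpectrum.isOpenMap_comap_of_hasGoingDown_of_finitePresentation
    (R := k[X]) (S := D) _ isOpen_univ
  have hgeneric : (⟨⊥, Ideal.isPrime_bot⟩ : PrimeSpectrum k[X]) ∈
      PrimeSpectrum.comap (algebraMap k[X] D) '' Set.univ :=
    ⟨⟨⊥, Ideal.isPrime_bot⟩, trivial, PrimeSpectrum.ext (Ideal.comap_bot_of_injective _ hinj)⟩
  obtain ⟨_, ⟨f, rfl⟩, hf, hfsub⟩ :=
    PrimeSpectrum.isTopologicalBasis_basic_opens.exists_subset_of_mem_open hgeneric hopen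
  have hf0 : f ≠ 0 := by simpa [PrimeSpectrum.mem_basicOpen] using hf
  refine (finite_setOfPred_isRoot hf0).subset fun a ha => ?_
  by_contra hroot
  have hprime : (Ideal.span {X - C a}).IsPrime :=
    (Ideal.span_singleton_prime (X_sub_C_ne_zero a)).mpr (prime_X_sub_C a)
  obtain ⟨P, -, hP⟩ := hfsub (show ⟨_, hprime⟩ ∈ PrimeSpectrum.basicOpen f by
    simpa [PrimeSpectrum.mem_basicOpen, Ideal.mem_span_singleton, dvd_iff_isRoot] using hroot)
  have hmem : X - C a ∈ Ideal.comap (algebraMap k[X] D) P.asIdeal := by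
    rw [show Ideal.comap _ P.asIdeal = _ from congrArg PrimeSpectrum.asIdeal hP]
    exact Ideal.mem_span_singleton_self _
  refine P.2.ne_top (Ideal.eq_top_of_isUnit_mem _ hmem ?_)
  simpa [RingHom.algebraMap_toAlgebra] using ha

theorem IsSimpleDiffRing.isUnit_of_apply_eq {R : Type*} [CommRing R] {φ : R ≃+* R}
    (hsimple : IsSimpleDiffRing φ) {x : R} (hx : φ x = x) (hx0 : x ≠ 0) : IsUnit x := by
  have hdiff : IsDiffIdeal φ (Ideal.span {x}) := fun y hy => by
    obtain ⟨r, rfl⟩ := Ideal.mem_span_singleton'.mp hy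
    exact Ideal.mem_span_singleton'.mpr ⟨φ r, by rw [map_mul, hx]⟩
  rcases hsimple _ hdiff with hbot | htop
  · exact absurd (Ideal.span_singleton_eq_bot.mp hbot) hx0
  · exact Ideal.span_singleton_eq_top.mp htop

theorem IsSimpleDiffRing.isAlgebraic_of_apply_eq {k R : Type*} [Field k] [CharZero k]
    [CommRing R] [Algebra k R] [Algebra.FiniteType k R] {φ : R ≃+* R}
    (hsimple : IsSimpleDiffRing φ) {x : R} (hx : φ x = x) : IsAlgebraic k x := by
  by_contra htr
  have hinj : Function.Injective (aeval (R := k) x) := transcendental_iff_injective.mp htr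
  obtain ⟨P, hP, -, hdisj⟩ := Ideal.exists_le_prime_disjoint ⊥
    ((nonZeroDivisors k[X]).map (aeval (R := k) x)) <| by
      rw [Set.disjoint_left]
      rintro _ rfl ⟨q, hq, hq0⟩
      exact nonZeroDivisors.ne_zero hq (hinj (by rw [hq0, map_zero]))
  let π := Ideal.Quotient.mkₐ k P
  have htrD : Transcendental k (π x) := by
    refine transcendental_iff_injective.mpr ((injective_iff_map_eq_zero _).mpr fun q hq => ?_)
    by_contra hq0
    rw [aeval_algHom_apply, Ideal.Quotient.mkₐ_eq_mk, Ideal.Quotient.eq_zero_iff_mem] at hq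
    exact Set.disjoint_left.mp hdisj hq
      ⟨q, mem_nonZeroDivisors_of_ne_zero hq0, rfl⟩
  refine (Set.infinite_range_of_injective (Nat.cast_injective (R := k))).mono ?_
    htrD.finite_setOf_isUnit_sub
  rintro _ ⟨m, rfl⟩
  have hfix : φ (x - m) = x - m := by rw [map_sub, map_natCast, hx]
  have hne : x - m ≠ 0 := fun h => htr (by
    rw [sub_eq_zero.mp h, ← map_natCast (algebraMap k R)]; exact isAlgebraic_algebraMap _)
  simpa using (hsimple.isUnit_of_apply_eq hfix hne).map π

theorem isIntegral_fixedSubfield_of_apply_eq {k R : Type*} [Field k] [CommRing R] [Algebra k R]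
    {φk : k ≃+* k} {φR : R ≃+* R} (hcompat : DiffCompat R φk φR) {x : R} (hx : φR x = x)
    (halg : IsAlgebraic k x) : IsIntegral (fixedSubfield φk) x := by
  have hint : IsIntegral k x := halg.isIntegral
  set p := minpoly k x
  have hφp : p.map (φk : k →+* k) = p := by
    have haeval : aeval x (p.map (φk : k →+* k)) = φR (aeval x p) := by
      rw [aeval_def, eval₂_map, aeval_def, ← RingEquiv.coe_toRingHom, hom_eval₂,
        RingEquiv.coe_toRingHom, hx]
      congr 1
      ext a
      exact (hcompat a).symm
    refine minpoly.unique k x ((minpoly.monic hint).map _) (by rw [haeval, minpoly.aeval, map_zero])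
      fun q hq hqx => ?_
    rw [degree_map_eq_of_injective φk.injective]
    exact minpoly.min k x hq hqx
  have hlifts : p ∈ lifts (algebraMap (fixedSubfield φk) k) :=
    (lifts_iff_coeff_lifts p).mpr fun i =>
      ⟨⟨p.coeff i, show φk _ = _ by simpa using congrArg (coeff · i) hφp⟩, rfl⟩
  obtain ⟨q, hqp, -, hq⟩ := lifts_and_degree_eq_and_monic hlifts (minpoly.monic hint)
  refine ⟨q, hq, ?_⟩
  rw [IsScalarTower.algebraMap_eq (fixedSubfield φk) k R, ← eval₂_map, hqp]
  exact minpoly.aeval k x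

theorem IsSimpleDiffRing.exists_algebraMap_eq_of_apply_eq {k R : Type*} [Field k] [CharZero k]
    {φk : k ≃+* k} (hC : IsRealClosedField (fixedSubfield φk)) [CommRing R] [Nontrivial R]
    [Algebra k R] [Algebra.FiniteType k R] {φR : R ≃+* R} (hcompat : DiffCompat R φk φR)
    (hsimple : IsSimpleDiffRing φR) (hreal : IsRealRing R) {x : R} (hx : φR x = x) :
    ∃ a : k, φk a = a ∧ algebraMap k R a = x := by
  have hint := isIntegral_fixedSubfield_of_apply_eq hcompat hx (hsimple.isAlgebraic_of_apply_eq hx)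
  let F := Algebra.adjoin (fixedSubfield φk) {x}
  have hfix : ∀ y ∈ F, φR y = y := fun y hy => by
    induction hy using Algebra.adjoin_induction with
    | mem y hy => rwa [Set.mem_singleton_iff.mp hy]
    | algebraMap c => exact (hcompat c).trans (congrArg _ c.2)
    | add y z _ _ hy hz => rw [map_add, hy, hz]
    | mul y z _ _ hy hz => rw [map_mul, hy, hz]
  -- `F` is a domain because its nonzero elements are units of `R`.
  have : NoZeroDivisors F := ⟨fun {a b} hab => by
    by_contra! h
    have ha := hsimple.isUnit_of_apply_eq (hfix a a.2) (Subtype.coe_ne_coe.mpr h.1)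
    have hb := hsimple.isUnit_of_apply_eq (hfix b b.2) (Subtype.coe_ne_coe.mpr h.2)
    exact (ha.mul hb).ne_zero (congrArg Subtype.val hab)⟩
  have : IsDomain F := NoZeroDivisors.to_isDomain F
  obtain ⟨c, hc⟩ := hC.mem_range_of_isIntegral (hreal.of_injective F.val Subtype.val_injective)
    ((isIntegral_algHom_iff F.val Subtype.val_injective
      (x := ⟨x, Algebra.self_mem_adjoin_singleton _ x⟩)).mp hint)
  exact ⟨c, c.2, congrArg Subtype.val hc⟩

theorem IsAdjoinI.exists_eq_of_apply_eq {k R Ri : Type*} [CommRing k] [CommRing R] [CommRing Ri]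
    [Algebra k R] [Algebra R Ri] [Algebra k Ri] [IsScalarTower k R Ri] {j : Ri}
    (hRi : IsAdjoinI R Ri j) {φk : k ≃+* k} {φR : R ≃+* R} {φi : Ri ≃+* Ri}
    (hconst : ∀ x : R, φR x = x → ∃ a : k, φk a = a ∧ algebraMap k R a = x)
    (hcompat : DiffCompat Ri φR φi) (hφj : φi j = j) {e : Ri} (he : φi e = e) :
    ∃ a b : k, φk a = a ∧ φk b = b ∧ e = algebraMap k Ri a + algebraMap k Ri b * j := by
  obtain ⟨⟨x, y⟩, hxy, huniq⟩ := hRi.2 e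
  have hφxy : e = algebraMap R Ri (φR x) + algebraMap R Ri (φR y) * j := by
    conv_lhs => rw [← he, hxy]
    rw [map_add, map_mul, hφj, hcompat, hcompat]
  obtain ⟨hx, hy⟩ := Prod.ext_iff.mp (huniq (φR x, φR y) hφxy)
  obtain ⟨a, ha, rfl⟩ := hconst x hx
  obtain ⟨b, hb, rfl⟩ := hconst y hy
  exact ⟨a, b, ha, hb, by simpa only [← IsScalarTower.algebraMap_apply] using hxy⟩

theorem GeneratedByFund.finiteType {k S : Type*} [CommSemiring k] [CommRing S] [Algebra k S]
    {n : ℕ} {U : Matrix (Fin n) (Fin n) S} (hgen : GeneratedByFund k U) :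
    Algebra.FiniteType k S := by
  classical
  have hfin : ((Set.range fun p : Fin n × Fin n => U p.1 p.2) ∪ {Ring.inverse U.det}).Finite :=
    (Set.finite_range _).union (Set.finite_singleton _)
  exact ⟨⟨hfin.toFinset, by rw [Set.Finite.coe_toFinset]; exact hgen⟩⟩

theorem GeneratedByFund.algHom_ext {k S B : Type*} [CommRing k] [CommRing S] [CommRing B]
    [Algebra k S] [Algebra k B] {n : ℕ} {U : Matrix (Fin n) (Fin n) S}
    (hgen : GeneratedByFund k U) (hU : IsUnit U.det) {f g : S →ₐ[k] B}
    (hfg : U.map f = U.map g) : f = g := by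
  have hdet : f U.det = g U.det := by
    rw [AlgHom.map_det, AlgHom.map_det]
    exact congrArg Matrix.det hfg
  refine AlgHom.ext_of_adjoin_eq_top hgen ?_
  rintro _ (⟨⟨p, q⟩, rfl⟩ | hinv)
  · exact congrFun (congrFun hfg p) q
  · rw [Set.mem_singleton_iff.mp hinv]
    have hf : f U.det * f (Ring.inverse U.det) = 1 := by
      rw [← map_mul, Ring.mul_inverse_cancel _ hU, map_one]
    have hg : g U.det * g (Ring.inverse U.det) = 1 := by
      rw [← map_mul, Ring.mul_inverse_cancel _ hU, map_one]
    exact (IsUnit.of_mul_eq_one _ hf).mul_left_cancel (hf.trans (hdet ▸ hg.symm))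

namespace Matrix

variable {m S : Type*} [Fintype m] [CommRing S]

theorem inv_mul_map_eq_of_map_eq_mul [DecidableEq m] (σ : S →+* S) {A U V : Matrix m m S}
    (hA : IsUnit A.det) (hU : IsUnit U.det) (hσU : U.map σ = A * U) (hσV : V.map σ = A * V) :
    (U⁻¹ * V).map σ = U⁻¹ * V := by
  have hAU : IsUnit (A * U).det := by rw [det_mul]; exact hA.mul hU
  calc (U⁻¹ * V).map σ = (A * U)⁻¹ * ((A * U) * (U⁻¹ * V).map σ) :=
        (nonsing_inv_mul_cancel_left _ _ hAU).symm
    _ = (A * U)⁻¹ * (A * V) := by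
        rw [← hσU, ← Matrix.map_mul, mul_nonsing_inv_cancel_left _ _ hU, hσV]
    _ = U⁻¹ * V := by rw [mul_inv_rev, mul_assoc, nonsing_inv_mul_cancel_left _ _ hA]

theorem inv_mul_map_comp [DecidableEq m] {U : Matrix m m S} (hU : IsUnit U.det) (f g : S →+* S)
    (hfix : (U⁻¹ * U.map g).map f = U⁻¹ * U.map g) :
    U⁻¹ * U.map (f.comp g) = (U⁻¹ * U.map f) * (U⁻¹ * U.map g) := by
  have hfg : U.map (f.comp g) = U.map f * (U⁻¹ * U.map g) := by
    calc U.map (f.comp g) = (U * (U⁻¹ * U.map g)).map f := by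
          rw [mul_nonsing_inv_cancel_left _ _ hU, Matrix.map_map]; rfl
      _ = U.map f * (U⁻¹ * U.map g) := by rw [Matrix.map_mul, hfix]
  rw [hfg, mul_assoc]

end Matrix

namespace IsFundamentalMatrix

variable {k S : Type*} [CommRing k] [CommRing S] [Algebra k S] {φS : S ≃+* S} {n : ℕ}
  {A : Matrix (Fin n) (Fin n) k} {U : Matrix (Fin n) (Fin n) S}

theorem map_algebraMap {T : Type*} [CommRing T] [Algebra S T] [Algebra k T] [IsScalarTower k S T]
    {φT : T ≃+* T} (hcompat : DiffCompat T φS φT) (hU : IsFundamentalMatrix φS A U) :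
    IsFundamentalMatrix φT A (U.map (algebraMap S T)) := by
  refine ⟨by simpa only [RingHom.map_det, RingHom.mapMatrix_apply] using hU.1.map (algebraMap S T),
    ?_⟩
  calc (U.map (algebraMap S T)).map φT = (U.map φS).map (algebraMap S T) := by
        ext; exact hcompat _
    _ = A.map (algebraMap k T) * U.map (algebraMap S T) := by
        rw [hU.2, Matrix.map_mul, Matrix.map_map, ← RingHom.coe_comp,
          ← IsScalarTower.algebraMap_eq]

theorem map_of_commute (hU : IsFundamentalMatrix φS A U) {ψ : S ≃+* S}
    (hcomm : ∀ y, ψ (φS y) = φS (ψ y)) (hfix : ∀ c : k, ψ (algebraMap k S c) = algebraMap k S c) :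
    IsFundamentalMatrix φS A (U.map ψ) := by
  refine ⟨by simpa only [RingEquiv.map_det, RingEquiv.mapMatrix_apply] using hU.1.map ψ, ?_⟩
  calc (U.map ψ).map φS = (U.map φS).map ψ := by ext; exact (hcomm _).symm
    _ = A.map (algebraMap k S) * U.map ψ := by
        rw [hU.2, ← RingEquiv.coe_toRingHom, Matrix.map_mul]
        congr 1
        ext; exact hfix _

theorem inv_mul_map_eq (hA : IsUnit A.det) (hU : IsFundamentalMatrix φS A U)
    {V : Matrix (Fin n) (Fin n) S} (hV : IsFundamentalMatrix φS A V) :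
    (U⁻¹ * V).map φS = U⁻¹ * V := by
  have hAS : IsUnit (A.map (algebraMap k S)).det := by
    simpa only [RingHom.map_det, RingHom.mapMatrix_apply] using hA.map (algebraMap k S)
  exact Matrix.inv_mul_map_eq_of_map_eq_mul (φS : S →+* S) hAS hU.1 hU.2 hV.2

end IsFundamentalMatrix

theorem statement7_general
    {k : Type u} [Field k] [CharZero k] (φk : k ≃+* k)
    (hC_rc : IsRealClosedField (↥(fixedSubfield φk)))
    {n : ℕ} (A : Matrix (Fin n) (Fin n) k) (hA : IsUnit A.det)
    (R : Type v) [CommRing R] [Algebra k R] (φR : R ≃+* R)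
    (hPV : IsPicardVessiot k R φk φR A) (hRreal : IsRealRing R)
    (U : Matrix (Fin n) (Fin n) R) (hU : IsFundamentalMatrix φR A U)
    (hUgen : GeneratedByFund k U)
    (Ri : Type w) [CommRing Ri] [Algebra R Ri] [Algebra k Ri] [IsScalarTower k R Ri]
    (j : Ri) (hRi : IsAdjoinI R Ri j)
    (φi : Ri ≃+* Ri) (hcompat : DiffCompat Ri φR φi) (hφj : φi j = j) :
    -- `GCond ψ` : `ψ` is a difference automorphism of `R[i]` fixing `k[i]` pointwise
    let GCond : (Ri ≃+* Ri) → Prop := fun ψ =>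
      (∀ y : Ri, ψ (φi y) = φi (ψ y)) ∧
      (∀ c : k, ψ (algebraMap k Ri c) = algebraMap k Ri c) ∧ ψ j = j
    -- `ρ ψ = U⁻¹ ψ(U)` computed in `R[i]`
    let ρ : (Ri ≃+* Ri) → Matrix (Fin n) (Fin n) Ri := fun ψ =>
      (U.map (algebraMap R Ri))⁻¹ * U.map fun r => ψ (algebraMap R Ri r)
    -- `ρ ψ ∈ GL_n(C[i])`
    (∀ ψ, GCond ψ →
      (∀ p q : Fin n, ∃ a b : k, φk a = a ∧ φk b = b ∧
        ρ ψ p q = algebraMap k Ri a + algebraMap k Ri b * j) ∧ IsUnit (ρ ψ).det) ∧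
    -- `ρ` is a group homomorphism: `ρ (ψ₁ ∘ ψ₂) = ρ ψ₁ * ρ ψ₂`
    (∀ ψ₁ ψ₂, GCond ψ₁ → GCond ψ₂ → ρ (ψ₂.trans ψ₁) = ρ ψ₁ * ρ ψ₂) ∧
    -- `ρ` is injective on `G`, the group of restrictions to `R`
    (∀ ψ₁ ψ₂, GCond ψ₁ → GCond ψ₂ → ρ ψ₁ = ρ ψ₂ →
      ∀ r : R, ψ₁ (algebraMap R Ri r) = ψ₂ (algebraMap R Ri r)) := by
  intro GCond ρ
  obtain ⟨hnt, hRk, -, hsimple⟩ := hPV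
  have := hUgen.finiteType
  have hconst : ∀ e : Ri, φi e = e → ∃ a b : k, φk a = a ∧ φk b = b ∧
      e = algebraMap k Ri a + algebraMap k Ri b * j :=
    fun e he => hRi.exists_eq_of_apply_eq
      (fun x hx => hsimple.exists_algebraMap_eq_of_apply_eq hC_rc hRk hRreal hx) hcompat hφj he
  let Ui := U.map (algebraMap R Ri)
  have hUi : IsFundamentalMatrix φi A Ui := hU.map_algebraMap hcompat
  have hρ : ∀ ψ : Ri ≃+* Ri, ρ ψ = Ui⁻¹ * Ui.map ψ := fun _ => rfl
  have hρ_const : ∀ ψ, GCond ψ → ∀ p q, ∃ a b : k, φk a = a ∧ φk b = b ∧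
      ρ ψ p q = algebraMap k Ri a + algebraMap k Ri b * j := fun ψ hψ p q =>
    hconst _ (congrFun₂ (hUi.inv_mul_map_eq hA (hUi.map_of_commute hψ.1 hψ.2.1)) p q)
  refine ⟨fun ψ hψ => ⟨hρ_const ψ hψ, ?_⟩, fun ψ₁ ψ₂ h₁ h₂ => ?_, fun ψ₁ ψ₂ h₁ h₂ hρ₁₂ r => ?_⟩
  · rw [hρ, Matrix.det_mul]
    exact (Matrix.isUnit_nonsing_inv_det _ hUi.1).mul (hUi.map_of_commute hψ.1 hψ.2.1).1
  · refine Matrix.inv_mul_map_comp hUi.1 ψ₁ ψ₂ ?_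
    ext p q
    obtain ⟨a, b, -, -, hab⟩ := hρ_const ψ₂ h₂ p q
    change ψ₁ (ρ ψ₂ p q) = ρ ψ₂ p q
    rw [hab, map_add, map_mul, h₁.2.1, h₁.2.1, h₁.2.2]
  · let restrict : ∀ ψ, GCond ψ → R →ₐ[k] Ri := fun ψ hψ =>
      (AlgEquiv.ofRingEquiv hψ.2.1).toAlgHom.comp (IsScalarTower.toAlgHom k R Ri)
    have hUψ : Ui.map ψ₁ = Ui.map ψ₂ := by
      rw [← Matrix.mul_nonsing_inv_cancel_left Ui (Ui.map ψ₁) hUi.1, ← hρ, hρ₁₂, hρ,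
        Matrix.mul_nonsing_inv_cancel_left _ _ hUi.1]
    exact DFunLike.congr_fun
      (hUgen.algHom_ext hU.1 (f := restrict ψ₁ h₁) (g := restrict ψ₂ h₂) hUψ) r

/-- For a real Picard–Vessiot extension `(R, φ)` with fundamental matrix `U`, the map
`ρ_U : ψ ↦ U⁻¹ψ(U)` on the real difference Galois group `G` (restrictions to `R` of the
difference automorphisms of `R[i]` fixing `k[i]` pointwise) takes values in `GL_n(C[i])`
and is an injective group homomorphism. -/
theorem statement7
    {k : Type u} [Field k] [CharZero k] (φk : k ≃+* k)
    (hk_real : IsRealRing k)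
    (hC_rc : IsRealClosedField (↥(fixedSubfield φk)))
    {n : ℕ} (A : Matrix (Fin n) (Fin n) k) (hA : IsUnit A.det)
    (R : Type v) [CommRing R] [Algebra k R] (φR : R ≃+* R)
    (hPV : IsPicardVessiot k R φk φR A) (hRreal : IsRealRing R)
    (U : Matrix (Fin n) (Fin n) R) (hU : IsFundamentalMatrix φR A U)
    (hUgen : GeneratedByFund k U)
    (Ri : Type w) [CommRing Ri] [Algebra R Ri] [Algebra k Ri] [IsScalarTower k R Ri]
    (j : Ri) (hRi : IsAdjoinI R Ri j)
    (φi : Ri ≃+* Ri) (hcompat : DiffCompat Ri φR φi) (hφj : φi j = j) :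
    -- `GCond ψ` : `ψ` is a difference automorphism of `R[i]` fixing `k[i]` pointwise
    let GCond : (Ri ≃+* Ri) → Prop := fun ψ =>
      (∀ y : Ri, ψ (φi y) = φi (ψ y)) ∧
      (∀ c : k, ψ (algebraMap k Ri c) = algebraMap k Ri c) ∧ ψ j = j
    -- `ρ ψ = U⁻¹ ψ(U)` computed in `R[i]`
    let ρ : (Ri ≃+* Ri) → Matrix (Fin n) (Fin n) Ri := fun ψ =>
      (U.map (algebraMap R Ri))⁻¹ * U.map fun r => ψ (algebraMap R Ri r)
    -- `ρ ψ ∈ GL_n(C[i])`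
    (∀ ψ, GCond ψ →
      (∀ p q : Fin n, ∃ a b : k, φk a = a ∧ φk b = b ∧
        ρ ψ p q = algebraMap k Ri a + algebraMap k Ri b * j) ∧ IsUnit (ρ ψ).det) ∧
    -- `ρ` is a group homomorphism: `ρ (ψ₁ ∘ ψ₂) = ρ ψ₁ * ρ ψ₂`
    (∀ ψ₁ ψ₂, GCond ψ₁ → GCond ψ₂ → ρ (ψ₂.trans ψ₁) = ρ ψ₁ * ρ ψ₂) ∧
    -- `ρ` is injective on `G`, the group of restrictions to `R`
    (∀ ψ₁ ψ₂, GCond ψ₁ → GCond ψ₂ → ρ ψ₁ = ρ ψ₂ →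
      ∀ r : R, ψ₁ (algebraMap R Ri r) = ψ₂ (algebraMap R Ri r)) :=
  statement7_general φk hC_rc A hA R φR hPV hRreal U hU hUgen Ri j hRi φi hcompat hφj
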